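/- Filtered subspace lies in span of eigenvectors with nonzero filter value: with B invertible, B⁻¹A = X Λ X⁻¹, Λ diagonal, and Q = Σ_j ω_j (z_j B − A)⁻¹ B Y for Y ∈ ℂ^{n×m₀}, every column of Q is a linear combination of the columns x_i of X for which ρ_a(λ_i) ≠ 0; i.e. Q = X ρ_a(Λ) X⁻¹ Y, so the column space of Q is contained in the span of {x_i : ρ_a(λ_i) ≠ 0}. -/

import Mathlib

/-!
Since `B⁻¹ (z B - A) = X (z - Λ) X⁻¹`, each resolvent term satisfies
`(z_j B - A)⁻¹ B = X (z_j - Λ)⁻¹ X⁻¹`, and the weighted sum of these is `X ρ_a(Λ) X⁻¹`.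
Column `k` of `X D M` with `D` diagonal is `∑ i, (D i i * M i k) • x_i`, in which only the
columns `x_i` with `D i i ≠ 0` appear.
-/

open Matrix

namespace Matrix

variable {n : Type*} [Fintype n] [DecidableEq n]

theorem inv_diagonal_of_ne_zero {K : Type*} [Field K] {v : n → K} (hv : ∀ i, v i ≠ 0) :
    (diagonal v)⁻¹ = diagonal fun i => (v i)⁻¹ :=
  inv_eq_right_inv <| by simp [diagonal_mul_diagonal, hv]

theorem inv_conj {R : Type*} [CommRing R] {P : Matrix n n R} (hP : IsUnit P.det)
    (M : Matrix n n R) : (P * M * P⁻¹)⁻¹ = P * M⁻¹ * P⁻¹ := by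
  rw [mul_inv_rev, mul_inv_rev, nonsing_inv_nonsing_inv P hP, Matrix.mul_assoc]

theorem smul_one_sub_conj_diagonal {R : Type*} [CommRing R] {P : Matrix n n R}
    (hP : IsUnit P.det) (c : R) (d : n → R) :
    c • 1 - P * diagonal d * P⁻¹ = P * diagonal (fun i => c - d i) * P⁻¹ := by
  rw [← diagonal_sub, ← smul_one_eq_diagonal, Matrix.mul_sub, Matrix.sub_mul, Matrix.mul_smul,
    Matrix.mul_one, Matrix.smul_mul, mul_nonsing_inv P hP]

theorem inv_smul_sub_mul_eq_conj_diagonal {K : Type*} [Field K] {A B X : Matrix n n K}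
    {d : n → K} (hB : IsUnit B.det) (hX : IsUnit X.det)
    (hdiag : B⁻¹ * A = X * diagonal d * X⁻¹) {z : K} (hz : IsUnit (z • B - A).det) :
    (z • B - A)⁻¹ * B = X * diagonal (fun i => (z - d i)⁻¹) * X⁻¹ := by
  have hpencil : B⁻¹ * (z • B - A) = X * diagonal (fun i => z - d i) * X⁻¹ := by
    rw [Matrix.mul_sub, Matrix.mul_smul, nonsing_inv_mul B hB, hdiag,
      smul_one_sub_conj_diagonal hX]
  have hne : ∀ i, z - d i ≠ 0 := by
    have hunit : IsUnit (B⁻¹ * (z • B - A)).det := by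
      rw [det_mul]
      exact (isUnit_nonsing_inv_det B hB).mul hz
    rw [hpencil, det_conj ((isUnit_iff_isUnit_det X).mpr hX), det_diagonal,
      isUnit_iff_ne_zero, Finset.prod_ne_zero_iff] at hunit
    exact fun i => hunit i (Finset.mem_univ i)
  calc (z • B - A)⁻¹ * B = (B⁻¹ * (z • B - A))⁻¹ := by
        rw [mul_inv_rev, nonsing_inv_nonsing_inv B hB]
    _ = X * diagonal (fun i => (z - d i)⁻¹) * X⁻¹ := by
        rw [hpencil, inv_conj hX, inv_diagonal_of_ne_zero hne]

theorem sum_smul_mul_diagonal_mul {R ι m p : Type*} [CommSemiring R] (s : Finset ι)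
    (c : ι → R) (f : ι → n → R) (X : Matrix m n R) (W : Matrix n p R) :
    ∑ j ∈ s, c j • (X * diagonal (f j) * W) =
      X * diagonal (fun i => ∑ j ∈ s, c j * f j i) * W := by
  have hdiag : ∑ j ∈ s, c j • diagonal (f j) = diagonal (fun i => ∑ j ∈ s, c j * f j i) := by
    ext a b
    by_cases h : a = b <;> simp [h, Matrix.sum_apply]
  rw [← hdiag, Matrix.mul_sum, Matrix.sum_mul]
  simp only [Matrix.mul_smul, Matrix.smul_mul]

theorem col_mul_diagonal_mul_mem_span {R m p : Type*} [CommSemiring R] (X : Matrix m n R)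
    (ρ : n → R) (M : Matrix n p R) (k : p) :
    (X * diagonal ρ * M)ᵀ k ∈ Submodule.span R ((fun i => Xᵀ i) '' {i | ρ i ≠ 0}) := by
  have hcol : (X * diagonal ρ * M)ᵀ k = ∑ i, (ρ i * M i k) • Xᵀ i := by
    ext a
    rw [Matrix.mul_assoc, transpose_apply, mul_apply]
    simp only [diagonal_mul, Finset.sum_apply, Pi.smul_apply, transpose_apply, smul_eq_mul,
      mul_comm]
  rw [hcol]
  refine Submodule.sum_mem _ fun i _ => ?_
  by_cases hρ : ρ i = 0
  · simp [hρ]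
  · exact Submodule.smul_mem _ _ (Submodule.subset_span ⟨i, hρ, rfl⟩)

end Matrix

/-- the filtered subspace Q = Σ ω_j (z_jB−A)⁻¹BY equals Xρ_a(Λ)X⁻¹Y, so
every column of Q lies in the span of the eigenvector columns x_i with ρ_a(λ_i) ≠ 0. -/
theorem stmt15 {n ne m0 : ℕ} (A B X : Matrix (Fin n) (Fin n) ℂ) (d : Fin n → ℂ)
    (Y : Matrix (Fin n) (Fin m0) ℂ) (z ω : Fin ne → ℂ)
    (hB : IsUnit B.det) (hX : IsUnit X.det)
    (hdiag : B⁻¹ * A = X * Matrix.diagonal d * X⁻¹)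
    (hz : ∀ j, IsUnit (z j • B - A).det)
    (Q : Matrix (Fin n) (Fin m0) ℂ)
    (hQ : Q = ∑ j, ω j • ((z j • B - A)⁻¹ * (B * Y))) :
    Q = X * Matrix.diagonal (fun i => ∑ j, ω j / (z j - d i)) * X⁻¹ * Y ∧
    ∀ k, Qᵀ k ∈ Submodule.span ℂ ((fun i => Xᵀ i) '' {i | (∑ j, ω j / (z j - d i)) ≠ 0}) := by
  have hfilter : Q = X * diagonal (fun i => ∑ j, ω j / (z j - d i)) * (X⁻¹ * Y) := by
    calc Q = ∑ j, ω j • (X * diagonal (fun i => (z j - d i)⁻¹) * (X⁻¹ * Y)) := by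
          refine hQ.trans (Finset.sum_congr rfl fun j _ => ?_)
          rw [← Matrix.mul_assoc, inv_smul_sub_mul_eq_conj_diagonal hB hX hdiag (hz j),
            Matrix.mul_assoc]
      _ = X * diagonal (fun i => ∑ j, ω j / (z j - d i)) * (X⁻¹ * Y) := by
          simp only [sum_smul_mul_diagonal_mul, div_eq_mul_inv]
  exact ⟨hfilter.trans (Matrix.mul_assoc _ _ _).symm,
    fun k => hfilter ▸ col_mul_diagonal_mul_mem_span X _ _ k⟩
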